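/- (Theorem 1, boundedness.) For all integers a ≥ 0 and N ≥ 0, one has ‖μ^{(h)}_{n,ξ,q}(a, N)‖ ≤ ‖1+q‖ · ‖1−q‖^{−n}; in particular the values μ^{(h)}_{n,ξ,q}(a, N) are uniformly bounded, so μ^{(h)}_{n,ξ,q} extends to a (bounded) p-adic measure on X. -/

import Mathlib

open Filter

/-- The value `μ^{(h)}_{n,ξ,q}(a + d p^N ℤ_p)` of the twisted `(h,q)`-Euler measure:
`((1+q)/(1−q)^n) (−1)^a ξ^a q^{ha} ∑_{j≤n} C(n,j)(−1)^j q^{aj}/(1 + ξ^{dp^N} q^{(h+j)dp^N})`. -/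
noncomputable def twistedEulerMeasure {K : Type*} [Field K] (p d : ℕ) (h : ℤ) (n : ℕ)
    (ξ q : K) (a N : ℕ) : K :=
  ((1 + q) / (1 - q) ^ n) * (-1 : K) ^ a * ξ ^ a * q ^ (h * (a : ℤ)) *
    ∑ j ∈ Finset.range (n + 1),
      (n.choose j : K) * (-1 : K) ^ j * q ^ (a * j) /
        (1 + ξ ^ (d * p ^ N) * q ^ ((h + (j : ℤ)) * ((d : ℤ) * (p : ℤ) ^ N)))

/-!
Since `‖1 - q‖ < 1`, every power `q ^ z` (`z : ℤ`) lies within distance `< 1` of `1`. If a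
denominator `1 + ζ q ^ z`, with `ζ ^ k = 1` and `k` odd, had norm `< 1`, then `ζ` would lie within
`< 1` of `-1`, hence `1 = ζ ^ k` within `< 1` of `(-1) ^ k = -1`, i.e. `‖2‖ < 1`, impossible for
odd `p`. So every denominator has norm `1`, every summand has norm `≤ 1`, and by the ultrametric
inequality so does the sum, while the prefactor has norm `‖1 + q‖ / ‖1 - q‖ ^ n`.
-/

lemma norm_eq_one_of_pow_eq_one {K : Type*} [NormedDivisionRing K] {ζ : K} {k : ℕ}
    (hζ : ζ ^ k = 1) (hk : k ≠ 0) : ‖ζ‖ = 1 := by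
  rw [← pow_eq_one_iff_of_nonneg (norm_nonneg ζ) hk, ← norm_pow, hζ, norm_one]

namespace IsUltrametricDist

lemma norm_pow_sub_pow_le {R : Type*} [SeminormedCommRing R] [NormOneClass R]
    [IsUltrametricDist R] {x y : R} (hx : ‖x‖ ≤ 1) (hy : ‖y‖ ≤ 1) (k : ℕ) :
    ‖x ^ k - y ^ k‖ ≤ ‖x - y‖ := by
  have hpow {z : R} (hz : ‖z‖ ≤ 1) (i : ℕ) : ‖z ^ i‖ ≤ 1 :=
    (_root_.norm_pow_le z i).trans (pow_le_one₀ (norm_nonneg z) hz)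
  have hsum : ‖∑ i ∈ Finset.range k, x ^ i * y ^ (k - 1 - i)‖ ≤ 1 :=
    norm_sum_le_of_forall_le_of_nonneg zero_le_one fun i _ =>
      (norm_mul_le _ _).trans (mul_le_one₀ (hpow hx i) (norm_nonneg _) (hpow hy _))
  calc ‖x ^ k - y ^ k‖ = ‖(∑ i ∈ Finset.range k, x ^ i * y ^ (k - 1 - i)) * (x - y)‖ := by
        rw [geom_sum₂_mul]
    _ ≤ ‖x - y‖ := (norm_mul_le _ _).trans (mul_le_of_le_one_left (norm_nonneg _) hsum)

variable {K : Type*} [NormedField K] [IsUltrametricDist K]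

lemma norm_eq_one_of_norm_sub_one_lt_one {u : K} (hu : ‖u - 1‖ < 1) : ‖u‖ = 1 := by
  rw [← sub_add_cancel u 1, norm_add_eq_max_of_norm_ne_norm (by rw [norm_one]; exact hu.ne),
    norm_one, max_eq_right hu.le]

lemma norm_zpow_sub_one_lt_one {u : K} (hu : ‖u - 1‖ < 1) (z : ℤ) : ‖u ^ z - 1‖ < 1 := by
  have hu1 := norm_eq_one_of_norm_sub_one_lt_one hu
  have hpow {v : K} (hv : ‖v‖ = 1) (hv1 : ‖v - 1‖ < 1) (k : ℕ) : ‖v ^ k - 1‖ < 1 := by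
    simpa using (norm_pow_sub_pow_le hv.le norm_one.le k).trans_lt hv1
  have hinv : ‖u⁻¹ - 1‖ < 1 := by
    have hu0 : u ≠ 0 := norm_ne_zero_iff.mp (by rw [hu1]; exact one_ne_zero)
    rwa [show u⁻¹ - 1 = -(u⁻¹ * (u - 1)) by rw [mul_sub, inv_mul_cancel₀ hu0]; ring,
      norm_neg, norm_mul, norm_inv, hu1, inv_one, one_mul]
  obtain ⟨k, rfl | rfl⟩ := z.eq_nat_or_neg
  · simpa using hpow hu1 hu k
  · simpa [zpow_neg, ← inv_pow] using hpow (by rw [norm_inv, hu1, inv_one]) hinv k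

lemma norm_one_add_mul_eq_one (h2 : ‖(2 : K)‖ = 1) {ζ u : K} {k : ℕ} (hk : Odd k)
    (hζ : ζ ^ k = 1) (hu : ‖u - 1‖ < 1) : ‖1 + ζ * u‖ = 1 := by
  have hζ1 := norm_eq_one_of_pow_eq_one hζ (Nat.ne_of_odd_add hk)
  have hu1 := norm_eq_one_of_norm_sub_one_lt_one hu
  refine le_antisymm ?_ (not_lt.mp fun hlt => ?_)
  · exact (norm_add_le_max _ _).trans (by simp [norm_mul, hζ1, hu1])
  · have hclose : ‖ζ - (-1)‖ < 1 := by
      rw [show ζ - (-1) = (1 + ζ * u) + -(ζ * (u - 1)) by ring]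
      refine (norm_add_le_max _ _).trans_lt (max_lt hlt ?_)
      rwa [norm_neg, norm_mul, hζ1, one_mul]
    have := (norm_pow_sub_pow_le hζ1.le (by simp) k).trans_lt hclose
    rw [hζ, hk.neg_one_pow, sub_neg_eq_add, one_add_one_eq_two, h2] at this
    exact lt_irrefl _ this

end IsUltrametricDist

open IsUltrametricDist

lemma Padic.norm_two_eq_one {p : ℕ} [Fact p.Prime] (hp : Odd p) : ‖(2 : ℚ_[p])‖ = 1 := by
  rwa [← Nat.cast_ofNat, Padic.norm_natCast_eq_one_iff, Nat.coprime_two_right]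

lemma norm_twistedEulerMeasure_le {K : Type*} [NormedField K] [IsUltrametricDist K]
    (h2 : ‖(2 : K)‖ = 1) {q ξ : K} (hq : ‖1 - q‖ < 1) {k : ℕ} (hk : Odd k) (hξ : ξ ^ k = 1)
    (p d : ℕ) (h : ℤ) (n a N : ℕ) :
    ‖twistedEulerMeasure p d h n ξ q a N‖ ≤ ‖1 + q‖ * ‖1 - q‖⁻¹ ^ n := by
  have hq' : ‖q - 1‖ < 1 := by rwa [norm_sub_rev]
  have hq1 := norm_eq_one_of_norm_sub_one_lt_one hq'
  have hξ1 := norm_eq_one_of_pow_eq_one hξ (Nat.ne_of_odd_add hk)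
  have hden (z : ℤ) : ‖1 + ξ ^ (d * p ^ N) * q ^ z‖ = 1 :=
    norm_one_add_mul_eq_one h2 hk (by rw [← pow_mul, mul_comm, pow_mul, hξ, one_pow])
      (norm_zpow_sub_one_lt_one hq' z)
  have hsum : ‖∑ j ∈ Finset.range (n + 1), (n.choose j : K) * (-1 : K) ^ j * q ^ (a * j) /
      (1 + ξ ^ (d * p ^ N) * q ^ ((h + (j : ℤ)) * ((d : ℤ) * (p : ℤ) ^ N)))‖ ≤ 1 :=
    norm_sum_le_of_forall_le_of_nonneg zero_le_one fun j _ => by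
      simpa [hden, hq1] using norm_natCast_le_one K (n.choose j)
  rw [twistedEulerMeasure, norm_mul]
  refine (mul_le_of_le_one_right (norm_nonneg _) hsum).trans_eq ?_
  simp [hq1, hξ1, div_eq_mul_inv]

theorem twistedEulerMeasure_bounded_general
    {p : ℕ} [Fact p.Prime] (hp : Odd p)
    {K : Type*} [NontriviallyNormedField K] [IsUltrametricDist K]
    [Algebra ℚ_[p] K] (halg : ∀ x : ℚ_[p], ‖algebraMap ℚ_[p] K x‖ = ‖x‖)
    (q ξ : K) (hq : ‖1 - q‖ < (p : ℝ) ^ (-(1 : ℝ) / ((p : ℝ) - 1)))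
    (m : ℕ) (hξ : ξ ^ p ^ m = 1) (h : ℤ) (n : ℕ)
    {d : ℕ} :
    ∀ a N : ℕ, ‖twistedEulerMeasure p d h n ξ q a N‖ ≤ ‖1 + q‖ * ‖1 - q‖⁻¹ ^ n := by
  have hp1 : (1 : ℝ) < p := by exact_mod_cast (Fact.out : p.Prime).one_lt
  have hq1 : ‖1 - q‖ < 1 :=
    hq.trans (Real.rpow_lt_one_of_one_lt_of_neg hp1 (div_neg_of_neg_of_pos (by norm_num)
      (sub_pos.mpr hp1)))
  have h2 : ‖(2 : K)‖ = 1 := by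
    rw [← map_ofNat (algebraMap ℚ_[p] K) 2, halg, Padic.norm_two_eq_one hp]
  exact norm_twistedEulerMeasure_le h2 hq1 hp.pow hξ p d h n

/-- Theorem 1, boundedness: for all `a, N ≥ 0`,
`‖μ^{(h)}_{n,ξ,q}(a + dp^N ℤ_p)‖ ≤ ‖1+q‖ · ‖1−q‖^{−n}`, so the values are uniformly
bounded and `μ^{(h)}_{n,ξ,q}` extends to a bounded `p`-adic measure on `X`. -/
theorem twistedEulerMeasure_bounded
    {p : ℕ} [Fact p.Prime] (hp : Odd p)
    {K : Type*} [NontriviallyNormedField K] [CompleteSpace K] [IsUltrametricDist K]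
    [Algebra ℚ_[p] K] (halg : ∀ x : ℚ_[p], ‖algebraMap ℚ_[p] K x‖ = ‖x‖)
    (q ξ : K) (hq : ‖1 - q‖ < (p : ℝ) ^ (-(1 : ℝ) / ((p : ℝ) - 1)))
    (m : ℕ) (hξ : ξ ^ p ^ m = 1) (h : ℤ) (n : ℕ)
    {d : ℕ} (hd : Odd d) (hdpos : 0 < d) :
    ∀ a N : ℕ, ‖twistedEulerMeasure p d h n ξ q a N‖ ≤ ‖1 + q‖ * ‖1 - q‖⁻¹ ^ n :=
  twistedEulerMeasure_bounded_general hp halg q ξ hq m hξ h n
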